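/- Let B be a trimmed, aperiodic, polynomially ambiguous automaton. If B contains a cycle q →^{u^k} q reading u^k for some nonempty word u and k ≥ 1, then B contains a cycle q →^{u} q reading u itself. -/

import Mathlib

variable {Q Q' A R : Type*}

/-- `RunFrom Δ p w ρ`: `ρ` is the list of states visited after `p` along a run
reading `w` that starts in `p`. -/
def RunFrom (Δ : Q → A → Q → Prop) : Q → List A → List Q → Prop
  | _, [], [] => True
  | p, a :: w, q :: ρ => Δ p a q ∧ RunFrom Δ q w ρ
  | _, _, _ => False

/-- There is a run from `p` to `q` reading `w`. -/
def HasRun (Δ : Q → A → Q → Prop) (p : Q) (w : List A) (q : Q) : Prop :=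
  ∃ ρ, RunFrom Δ p w ρ ∧ (p :: ρ).getLast (List.cons_ne_nil _ _) = q

/-- `m`-fold power of a word. -/
def wpow (u : List A) (m : ℕ) : List A := (List.replicate m u).flatten

/-- Aperiodicity of a nondeterministic automaton. -/
def Aperiodic (Δ : Q → A → Q → Prop) : Prop :=
  ∃ m, 1 ≤ m ∧ ∀ (p q : Q) (u : List A), u ≠ [] →
    (HasRun Δ p (wpow u m) q ↔ HasRun Δ p (wpow u (m + 1)) q)

/-- `p` and `q` are in the same strongly connected component. -/
def SameSCC (Δ : Q → A → Q → Prop) (p q : Q) : Prop :=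
  p = q ∨ ((∃ u : List A, u ≠ [] ∧ HasRun Δ p u q) ∧ (∃ v : List A, v ≠ [] ∧ HasRun Δ q v p))

/-- The automaton is unambiguous from `p` to `q`. -/
def UnambFromTo (Δ : Q → A → Q → Prop) (p q : Q) : Prop :=
  ∀ (u : List A) (ρ₁ ρ₂ : List Q), u ≠ [] →
    RunFrom Δ p u ρ₁ → RunFrom Δ p u ρ₂ →
    (p :: ρ₁).getLast (List.cons_ne_nil _ _) = q →
    (p :: ρ₂).getLast (List.cons_ne_nil _ _) = q → ρ₁ = ρ₂

def SCCUnambiguous (Δ : Q → A → Q → Prop) : Prop :=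
  ∀ p q : Q, SameSCC Δ p q → UnambFromTo Δ p q

/-- The set of accepting runs on `w`, represented as pairs of an initial state and
the list of subsequently visited states. -/
def AccRuns (Δ : Q → A → Q → Prop) (I F : Set Q) (w : List A) : Set (Q × List Q) :=
  {x | x.1 ∈ I ∧ RunFrom Δ x.1 w x.2 ∧ (x.1 :: x.2).getLast (List.cons_ne_nil _ _) ∈ F}

/-- The sequence of weights along a run. -/
def wgtSeq (wgt : Q → A → Q → R) : Q → List A → List Q → List R
  | p, a :: w, q :: ρ => wgt p a q :: wgtSeq wgt q w ρ
  | _, _, _ => []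

/-! Trimness and polynomial ambiguity force every cycle to be unambiguous: two distinct cycles
at `q` reading `w` would yield `2 ^ n` accepting runs on a word `α w^n β` whose length is linear
in `n`. If `m` is the aperiodicity index and `N = k m`, then `q` has cycles `ρ` reading `u^N`
and `τ` reading `u^(N+1)`. Now `ρ τ` and `τ ρ` are cycles at `q` reading `u^(2N+1)`, so they
coincide; hence `τ` starts with `ρ`, and the rest of `τ` is a cycle at `q` reading `u`. -/

open Filter Polynomial

def IsTrimmed (Δ : Q → A → Q → Prop) (I F : Set Q) : Prop :=
  ∀ q : Q, ∃ (w : List A) (x : Q × List Q), x ∈ AccRuns Δ I F w ∧ q ∈ x.1 :: x.2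

def IsPolynomiallyAmbiguous (Δ : Q → A → Q → Prop) (I F : Set Q) : Prop :=
  ∃ P : Polynomial ℕ, ∀ w : List A, w ≠ [] → (AccRuns Δ I F w).ncard ≤ P.eval w.length

def endState (p : Q) (ρ : List Q) : Q := (p :: ρ).getLast (List.cons_ne_nil _ _)

def cycles (Δ : Q → A → Q → Prop) (q : Q) (w : List A) : Set (List Q) :=
  {ρ | RunFrom Δ q w ρ ∧ endState q ρ = q}

@[simp] lemma endState_nil (p : Q) : endState p [] = p := rfl

@[simp] lemma endState_cons (p r : Q) (ρ : List Q) : endState p (r :: ρ) = endState r ρ := by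
  simp [endState]

lemma endState_append (p : Q) (ρ₁ ρ₂ : List Q) :
    endState p (ρ₁ ++ ρ₂) = endState (endState p ρ₁) ρ₂ := by
  induction ρ₁ generalizing p with
  | nil => rfl
  | cons r ρ ih => simp [ih]

@[simp] lemma wpow_succ (u : List A) (n : ℕ) : wpow u (n + 1) = u ++ wpow u n := by
  simp [wpow, List.replicate_succ]

lemma wpow_succ' (u : List A) (n : ℕ) : wpow u (n + 1) = wpow u n ++ u := by
  simp [wpow, List.replicate_succ']

lemma wpow_add (u : List A) (m n : ℕ) : wpow u (m + n) = wpow u m ++ wpow u n := by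
  rw [wpow, List.replicate_add, List.flatten_append]; rfl

lemma wpow_mul (u : List A) (a b : ℕ) : wpow u (a * b) = wpow (wpow u a) b := by
  induction b with
  | zero => rfl
  | succ b ih => rw [Nat.mul_succ, wpow_add, ih, wpow_succ']

@[simp] lemma length_wpow (u : List A) (n : ℕ) : (wpow u n).length = n * u.length := by
  simp [wpow]

lemma wpow_append_comm (u : List A) (n : ℕ) : wpow u n ++ u = u ++ wpow u n := by
  rw [← wpow_succ', wpow_succ]

namespace Polynomial

lemma eval_le_eval_one_mul_pow (P : ℕ[X]) {n : ℕ} (hn : 1 ≤ n) :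
    P.eval n ≤ P.eval 1 * n ^ P.natDegree := by
  rw [eval_eq_sum_range, eval_eq_sum_range, Finset.sum_mul]
  refine Finset.sum_le_sum fun i hi => ?_
  rw [one_pow, mul_one]
  exact Nat.mul_le_mul_left _ (Nat.pow_le_pow_right hn (Finset.mem_range_succ_iff.mp hi))

lemma eventually_eval_lt_two_pow (P : ℕ[X]) : ∀ᶠ n : ℕ in atTop, P.eval n < 2 ^ n := by
  have hlo : (fun n : ℕ => ((P.eval 1 : ℕ) : ℝ) * (n : ℝ) ^ P.natDegree) =o[atTop]
      fun n => (2 : ℝ) ^ n :=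
    (isLittleO_pow_const_const_pow_of_one_lt P.natDegree one_lt_two).const_mul_left _
  filter_upwards [hlo.def one_half_pos, eventually_ge_atTop 1] with n hbound hn
  rw [Real.norm_of_nonneg (by positivity), Real.norm_of_nonneg (by positivity)] at hbound
  have hle : ((P.eval n : ℕ) : ℝ) ≤ (P.eval 1 : ℕ) * (n : ℝ) ^ P.natDegree := by
    exact_mod_cast eval_le_eval_one_mul_pow P hn
  have hlt : ((P.eval n : ℕ) : ℝ) < 2 ^ n := by linarith [pow_pos (two_pos : (0 : ℝ) < 2) n]
  exact_mod_cast hlt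

end Polynomial

section Runs

variable {Δ : Q → A → Q → Prop}

@[simp] lemma runFrom_nil {p : Q} {ρ : List Q} : RunFrom Δ p [] ρ ↔ ρ = [] := by
  cases ρ <;> simp [RunFrom]

@[simp] lemma runFrom_cons {p : Q} {a : A} {w : List A} {ρ : List Q} :
    RunFrom Δ p (a :: w) ρ ↔ ∃ r ρ', ρ = r :: ρ' ∧ Δ p a r ∧ RunFrom Δ r w ρ' := by
  cases ρ <;> simp [RunFrom]

lemma RunFrom.length_eq {p : Q} {w : List A} {ρ : List Q} (h : RunFrom Δ p w ρ) :
    ρ.length = w.length := by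
  induction w generalizing p ρ with
  | nil => simp_all
  | cons a w ih =>
    obtain ⟨r, ρ', rfl, -, h⟩ := runFrom_cons.mp h
    simp [ih h]

lemma RunFrom.append {p : Q} {w₁ w₂ : List A} {ρ₁ ρ₂ : List Q} (h₁ : RunFrom Δ p w₁ ρ₁)
    (h₂ : RunFrom Δ (endState p ρ₁) w₂ ρ₂) : RunFrom Δ p (w₁ ++ w₂) (ρ₁ ++ ρ₂) := by
  induction w₁ generalizing p ρ₁ with
  | nil => simpa [runFrom_nil.mp h₁] using h₂
  | cons a w ih =>
    obtain ⟨r, ρ', rfl, hd, h₁⟩ := runFrom_cons.mp h₁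
    exact ⟨hd, ih h₁ h₂⟩

lemma RunFrom.exists_append_of_append {p : Q} {w₁ w₂ : List A} {ρ : List Q}
    (h : RunFrom Δ p (w₁ ++ w₂) ρ) :
    ∃ ρ₁ ρ₂, ρ = ρ₁ ++ ρ₂ ∧ RunFrom Δ p w₁ ρ₁ ∧ RunFrom Δ (endState p ρ₁) w₂ ρ₂ := by
  induction w₁ generalizing p ρ with
  | nil => exact ⟨[], ρ, rfl, trivial, h⟩
  | cons a w ih =>
    obtain ⟨r, ρ', rfl, hd, h⟩ := runFrom_cons.mp h
    obtain ⟨ρ₁, ρ₂, rfl, h₁, h₂⟩ := ih h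
    exact ⟨r :: ρ₁, ρ₂, rfl, ⟨hd, h₁⟩, h₂⟩

lemma hasRun_append_iff {p s : Q} {w₁ w₂ : List A} :
    HasRun Δ p (w₁ ++ w₂) s ↔ ∃ r, HasRun Δ p w₁ r ∧ HasRun Δ r w₂ s := by
  constructor
  · rintro ⟨ρ, h, rfl⟩
    obtain ⟨ρ₁, ρ₂, rfl, h₁, h₂⟩ := h.exists_append_of_append
    exact ⟨endState p ρ₁, ⟨ρ₁, h₁, rfl⟩, ⟨ρ₂, h₂, (endState_append p ρ₁ ρ₂).symm⟩⟩
  · rintro ⟨r, ⟨ρ₁, h₁, rfl⟩, ⟨ρ₂, h₂, rfl⟩⟩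
    exact ⟨ρ₁ ++ ρ₂, h₁.append h₂, endState_append p ρ₁ ρ₂⟩

lemma RunFrom.exists_hasRun_of_mem {p q : Q} {w : List A} {ρ : List Q} (h : RunFrom Δ p w ρ)
    (hq : q ∈ p :: ρ) :
    ∃ w₁ w₂, w = w₁ ++ w₂ ∧ HasRun Δ p w₁ q ∧ HasRun Δ q w₂ (endState p ρ) := by
  induction w generalizing p ρ with
  | nil =>
    obtain rfl := runFrom_nil.mp h
    obtain rfl := List.mem_singleton.mp hq
    exact ⟨[], [], rfl, ⟨[], trivial, rfl⟩, ⟨[], trivial, rfl⟩⟩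
  | cons a w ih =>
    obtain ⟨r, ρ', rfl, hd, hr⟩ := runFrom_cons.mp h
    rcases List.mem_cons.mp hq with rfl | hq
    · exact ⟨[], a :: w, rfl, ⟨[], trivial, rfl⟩, ⟨r :: ρ', ⟨hd, hr⟩, rfl⟩⟩
    · obtain ⟨w₁, w₂, rfl, ⟨ρ₁, h₁, e₁⟩, h₂⟩ := ih hr hq
      exact ⟨a :: w₁, w₂, rfl, ⟨r :: ρ₁, ⟨hd, h₁⟩, e₁⟩, h₂⟩

lemma IsTrimmed.exists_hasRun {I F : Set Q} (h : IsTrimmed Δ I F) (q : Q) :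
    ∃ i ∈ I, ∃ f ∈ F, ∃ α β, HasRun Δ i α q ∧ HasRun Δ q β f := by
  obtain ⟨w, ⟨i, ρ⟩, ⟨hi, hρ, hf⟩, hq⟩ := h q
  obtain ⟨α, β, -, hα, hβ⟩ := hρ.exists_hasRun_of_mem hq
  exact ⟨i, hi, _, hf, α, β, hα, hβ⟩

lemma HasRun.wpow {q : Q} {w : List A} (h : HasRun Δ q w q) (n : ℕ) :
    HasRun Δ q (wpow w n) q := by
  induction n with
  | zero => exact ⟨[], trivial, rfl⟩
  | succ n ih => exact wpow_succ w n ▸ hasRun_append_iff.mpr ⟨q, h, ih⟩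

lemma Aperiodic.exists_hasRun_wpow_succ_iff (h : Aperiodic Δ) :
    ∃ m, ∀ N, m ≤ N → ∀ (p q : Q) (u : List A), u ≠ [] →
      (HasRun Δ p (wpow u N) q ↔ HasRun Δ p (wpow u (N + 1)) q) := by
  obtain ⟨m, -, hm⟩ := h
  refine ⟨m, fun N hN p q u hu => ?_⟩
  obtain ⟨j, rfl⟩ := Nat.exists_eq_add_of_le hN
  rw [show m + j + 1 = m + 1 + j by omega, wpow_add, wpow_add, hasRun_append_iff,
    hasRun_append_iff]
  exact exists_congr fun r => and_congr_left' (hm p r u hu)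

lemma append_mem_cycles {q : Q} {v w : List A} {ρ σ : List Q} (hρ : ρ ∈ cycles Δ q v)
    (hσ : σ ∈ cycles Δ q w) : ρ ++ σ ∈ cycles Δ q (v ++ w) :=
  ⟨hρ.1.append (by rw [hρ.2]; exact hσ.1), by rw [endState_append, hρ.2, hσ.2]⟩

lemma cycles_finite [Finite Q] (q : Q) (w : List A) : (cycles Δ q w).Finite :=
  (List.finite_length_eq Q w.length).subset fun _ hρ => hρ.1.length_eq

lemma accRuns_finite [Finite Q] (I F : Set Q) (w : List A) : (AccRuns Δ I F w).Finite :=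
  (Set.finite_univ.prod (List.finite_length_eq Q w.length)).subset fun _ hx =>
    ⟨trivial, hx.2.1.length_eq⟩

lemma two_pow_le_ncard_cycles [Finite Q] {q : Q} {w : List A} {ρ₁ ρ₂ : List Q}
    (h₁ : ρ₁ ∈ cycles Δ q w) (h₂ : ρ₂ ∈ cycles Δ q w) (hne : ρ₁ ≠ ρ₂) (n : ℕ) :
    2 ^ n ≤ (cycles Δ q (wpow w n)).ncard := by
  induction n with
  | zero =>
    exact (Set.ncard_pos (cycles_finite q _)).mpr ⟨[], trivial, rfl⟩
  | succ n ih =>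
    have hmaps : ∀ x ∈ ({ρ₁, ρ₂} : Set (List Q)) ×ˢ cycles Δ q (wpow w n),
        x.1 ++ x.2 ∈ cycles Δ q (wpow w (n + 1)) := by
      rintro ⟨ρ, σ⟩ ⟨hρ | hρ, hσ⟩ <;> subst hρ <;> exact wpow_succ w n ▸ append_mem_cycles ‹_› hσ
    have hinj : Set.InjOn (fun x : List Q × List Q => x.1 ++ x.2)
        (({ρ₁, ρ₂} : Set (List Q)) ×ˢ cycles Δ q (wpow w n)) := by
      rintro ⟨ρ, σ⟩ ⟨hρ, -⟩ ⟨ρ', σ'⟩ ⟨hρ', -⟩ h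
      have hlen : ∀ {τ}, τ ∈ ({ρ₁, ρ₂} : Set (List Q)) → τ.length = w.length := by
        rintro τ (rfl | rfl)
        exacts [h₁.1.length_eq, h₂.1.length_eq]
      obtain ⟨rfl, rfl⟩ := List.append_inj h ((hlen hρ).trans (hlen hρ').symm)
      rfl
    calc 2 ^ (n + 1) ≤ ({ρ₁, ρ₂} : Set (List Q)).ncard * (cycles Δ q (wpow w n)).ncard := by
          rw [Set.ncard_pair hne, pow_succ']; exact Nat.mul_le_mul_left 2 ih
      _ = (({ρ₁, ρ₂} : Set (List Q)) ×ˢ cycles Δ q (wpow w n)).ncard := Set.ncard_prod.symm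
      _ ≤ (cycles Δ q (wpow w (n + 1))).ncard :=
          Set.ncard_le_ncard_of_injOn _ hmaps hinj (cycles_finite q _)

lemma ncard_cycles_le_ncard_accRuns [Finite Q] {I F : Set Q} {i f q : Q} {α β : List A}
    (hi : i ∈ I) (hf : f ∈ F) (hα : HasRun Δ i α q) (hβ : HasRun Δ q β f) (w : List A) :
    (cycles Δ q w).ncard ≤ (AccRuns Δ I F (α ++ w ++ β)).ncard := by
  obtain ⟨σ₁, hσ₁, e₁ : endState i σ₁ = q⟩ := hα
  obtain ⟨σ₂, hσ₂, e₂ : endState q σ₂ = f⟩ := hβ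
  refine Set.ncard_le_ncard_of_injOn (fun ρ => (i, σ₁ ++ ρ ++ σ₂)) ?_ ?_ (accRuns_finite I F _)
  · intro ρ hρ
    refine ⟨hi, (hσ₁.append (e₁ ▸ hρ.1)).append ?_, ?_⟩
    · rwa [endState_append, e₁, hρ.2]
    · change endState i (σ₁ ++ ρ ++ σ₂) ∈ F
      rwa [endState_append, endState_append, e₁, hρ.2, e₂]
  · intro ρ _ ρ' _ h
    exact List.append_cancel_left (List.append_cancel_right (Prod.ext_iff.mp h).2)

theorem IsTrimmed.unambFromTo_self [Finite Q] {I F : Set Q}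
    (htrim : IsTrimmed Δ I F) (hpoly : IsPolynomiallyAmbiguous Δ I F) (q : Q) :
    UnambFromTo Δ q q := by
  intro w ρ₁ ρ₂ hw h₁ h₂ e₁ e₂
  by_contra hne
  obtain ⟨P, hP⟩ := hpoly
  obtain ⟨i, hi, f, hf, α, β, hα, hβ⟩ := htrim.exists_hasRun q
  let R : ℕ[X] := P.comp (C α.length + X * C w.length + C β.length)
  obtain ⟨n, hlt, hn⟩ := (R.eventually_eval_lt_two_pow.and (eventually_ge_atTop 1)).exists
  have hword : α ++ wpow w n ++ β ≠ [] := List.ne_nil_of_length_pos <| by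
    have := Nat.mul_pos hn (List.length_pos_iff.mpr hw)
    simp only [List.length_append, length_wpow]
    omega
  have := calc
    2 ^ n ≤ (cycles Δ q (wpow w n)).ncard := two_pow_le_ncard_cycles ⟨h₁, e₁⟩ ⟨h₂, e₂⟩ hne n
    _ ≤ (AccRuns Δ I F (α ++ wpow w n ++ β)).ncard := ncard_cycles_le_ncard_accRuns hi hf hα hβ _
    _ ≤ P.eval (α ++ wpow w n ++ β).length := hP _ hword
    _ = R.eval n := by simp [R, add_assoc]
  omega

theorem UnambFromTo.hasRun_of_append_comm {q : Q} {v w : List A}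
    (hq : UnambFromTo Δ q q) (hv : HasRun Δ q v q) (hvw : HasRun Δ q (v ++ w) q) (hw : w ≠ [])
    (hcomm : v ++ w = w ++ v) : HasRun Δ q w q := by
  obtain ⟨ρ, hρ, eρ : endState q ρ = q⟩ := hv
  obtain ⟨τ, hτ, eτ : endState q τ = q⟩ := hvw
  have hρτ : ρ ++ τ ∈ cycles Δ q (v ++ (v ++ w)) := append_mem_cycles ⟨hρ, eρ⟩ ⟨hτ, eτ⟩
  have hτρ : τ ++ ρ ∈ cycles Δ q (v ++ (v ++ w)) := by
    rw [hcomm, ← List.append_assoc]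
    exact append_mem_cycles ⟨hτ, eτ⟩ ⟨hρ, eρ⟩
  have hcomm_runs : ρ ++ τ = τ ++ ρ :=
    hq _ _ _ (by simp [hw]) hρτ.1 hτρ.1 hρτ.2 hτρ.2
  obtain ⟨τ₁, τ₂, rfl, hτ₁, hτ₂⟩ := hτ.exists_append_of_append
  rw [List.append_assoc] at hcomm_runs
  obtain ⟨rfl, -⟩ := List.append_inj hcomm_runs (by rw [hρ.length_eq, hτ₁.length_eq])
  rw [eρ] at hτ₂
  exact ⟨τ₂, hτ₂, by rwa [endState_append, eρ] at eτ⟩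

end Runs

/-- In a trimmed, aperiodic, polynomially ambiguous automaton, if some power `u^k`
(`k ≥ 1`, `u` nonempty) labels a cycle at `q`, then `u` itself labels a cycle at `q`. -/
theorem cycle_of_power_cycle [Fintype Q] (Δ : Q → A → Q → Prop) (I F : Set Q)
    (htrim : ∀ q : Q, ∃ (w : List A) (x : Q × List Q),
      x ∈ AccRuns Δ I F w ∧ q ∈ x.1 :: x.2)
    (hap : Aperiodic Δ)
    (hpoly : ∃ P : Polynomial ℕ, ∀ w : List A, w ≠ [] →
      (AccRuns Δ I F w).ncard ≤ P.eval w.length)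
    (q : Q) (u : List A) (hu : u ≠ []) (k : ℕ) (hk : 1 ≤ k)
    (hcyc : HasRun Δ q (wpow u k) q) : HasRun Δ q u q := by
  obtain ⟨m, hm⟩ := hap.exists_hasRun_wpow_succ_iff
  have hN : HasRun Δ q (wpow u (k * m)) q := by
    rw [wpow_mul]; exact hcyc.wpow m
  have hN₁ : HasRun Δ q (wpow u (k * m) ++ u) q := by
    rw [← wpow_succ']; exact (hm _ (Nat.le_mul_of_pos_left m hk) q q u hu).mp hN
  exact (IsTrimmed.unambFromTo_self htrim hpoly q).hasRun_of_append_comm hN hN₁ hu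
    (wpow_append_comm u _)
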